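/- Let 𝒟 = {(i,0,2) : i = 0,1,2} ∪ {(i,j,0) : i ∈ {0,2}, j ∈ {0,1,2}} ∪ {(0,2,1)} ⊆ {0,1,2}³, and let E₄ ⊆ ℝ³ be the unique nonempty compact set with E₄ = ⋃_{d∈𝒟}(E₄+d)/3. Let K ⊆ ℝ be the unique nonempty compact set with K = (K/3) ∪ ((K+2)/3) (the middle-thirds Cantor set). Then: (1) the image of E₄ under the projection (x,y,z) ↦ z equals [0,1]; (2) E₄ ∩ (ℝ² × {1}) = [0,1] × {0} × {1}; (3) E₄ ∩ (ℝ² × {0}) = K × [0,1] × {0}. -/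

import Mathlib

/-!
The projection of `E₄` to the `z`-axis satisfies `P = ⋃_{e ∈ {0,1,2}} (P + e)/3`, as `[0,1]`
does. Since `E₄` lies between the heights `0` and `1`, a point of height `1` (resp. `0`) of `E₄`
can only be the image of a point of the same height under a digit of height `2` (resp. `0`);
hence the slice at height `1` is self-similar with digits `{0,1,2} × {0}`, like `[0,1] × {0}`,
and the slice at height `0` with digits `{0,2} × {0,1,2}`, like `K × [0,1]`. In each case both
sets are nonempty compact solutions of the same equation, whose Hutchinson operator contracts
the Hausdorff distance by `1/3`, so they coincide.
-/

open Metric Set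
open scoped NNReal

section Uniqueness

variable {X ι : Type*} [MetricSpace X] {f : ι → X → X} {I : Set ι} {K : ℝ≥0}

lemma infDist_le_mul_hausdorffDist_of_subset_biUnion (hf : ∀ i ∈ I, LipschitzWith K (f i))
    {A B : Set X} (hA : A ⊆ ⋃ i ∈ I, f i '' A) (hB : ∀ i ∈ I, MapsTo (f i) B B)
    (hBc : IsCompact B) (hBne : B.Nonempty) (hAB : hausdorffEDist A B ≠ ⊤)
    {x : X} (hx : x ∈ A) : infDist x B ≤ K * hausdorffDist A B := by
  obtain ⟨i, hi, y, hy, rfl⟩ : ∃ i ∈ I, ∃ y ∈ A, f i y = x := by simpa using hA hx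
  obtain ⟨t, ht, hyt⟩ := hBc.exists_infDist_eq_dist hBne y
  calc infDist (f i y) B ≤ dist (f i y) (f i t) := infDist_le_dist_of_mem (hB i hi ht)
    _ ≤ K * dist y t := (hf i hi).dist_le_mul y t
    _ ≤ K * hausdorffDist A B := by
      rw [← hyt]; gcongr; exact infDist_le_hausdorffDist_of_mem hy hAB

theorem eq_of_eq_biUnion_image_of_lipschitzWith (hK : K < 1)
    (hf : ∀ i ∈ I, LipschitzWith K (f i)) {S T : Set X}
    (hSne : S.Nonempty) (hSc : IsCompact S) (hTne : T.Nonempty) (hTc : IsCompact T)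
    (hS : S = ⋃ i ∈ I, f i '' S) (hT : T = ⋃ i ∈ I, f i '' T) : S = T := by
  have hmaps : ∀ {A : Set X}, A = ⋃ i ∈ I, f i '' A → ∀ i ∈ I, MapsTo (f i) A A :=
    fun hA i hi x hx => by rw [hA]; exact mem_biUnion hi (mem_image_of_mem _ hx)
  have hST : hausdorffEDist S T ≠ ⊤ :=
    hausdorffEDist_ne_top_of_nonempty_of_bounded hSne hTne hSc.isBounded hTc.isBounded
  have hle : hausdorffDist S T ≤ K * hausdorffDist S T := by
    refine hausdorffDist_le_of_infDist (mul_nonneg K.2 hausdorffDist_nonneg)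
      (fun x hx => ?_) (fun x hx => ?_)
    · exact infDist_le_mul_hausdorffDist_of_subset_biUnion hf hS.subset (hmaps hT) hTc hTne
        hST hx
    · rw [hausdorffDist_comm]
      exact infDist_le_mul_hausdorffDist_of_subset_biUnion hf hT.subset (hmaps hS) hSc hSne
        (by rwa [hausdorffEDist_comm]) hx
  have hK' : (K : ℝ) < 1 := hK
  have hzero : hausdorffDist S T = 0 :=
    le_antisymm (by nlinarith [hausdorffDist_nonneg (s := S) (t := T)]) hausdorffDist_nonneg
  exact (hSc.isClosed.hausdorffDist_zero_iff_eq hTc.isClosed hST).1 hzero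

end Uniqueness

lemma lipschitzWith_inv_three_smul_add {V : Type*} [NormedAddCommGroup V] [NormedSpace ℝ V]
    (d : V) : LipschitzWith 3⁻¹ fun x : V => (3 : ℝ)⁻¹ • (x + d) :=
  LipschitzWith.of_dist_le_mul fun x y => by
    simp [dist_eq_norm, ← smul_sub, norm_smul]

def IsTriadicSelfSimilar {V : Type*} [AddCommGroup V] [Module ℝ V] (D E : Set V) : Prop :=
  E = ⋃ d ∈ D, (fun x : V => (3 : ℝ)⁻¹ • (x + d)) '' E

namespace IsTriadicSelfSimilar

section Module

variable {V W : Type*} [AddCommGroup V] [Module ℝ V] [AddCommGroup W] [Module ℝ W]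
  {D E : Set V}

lemma mem_iff (h : IsTriadicSelfSimilar D E) {x : V} :
    x ∈ E ↔ ∃ d ∈ D, ∃ y ∈ E, (3 : ℝ)⁻¹ • (y + d) = x := by
  conv_lhs => rw [h]
  simp only [mem_iUnion₂, mem_image, exists_prop]

lemma image_linearMap (h : IsTriadicSelfSimilar D E) (π : V →ₗ[ℝ] W) :
    IsTriadicSelfSimilar (π '' D) (π '' E) := by
  unfold IsTriadicSelfSimilar
  conv_lhs => rw [h]
  simp only [image_iUnion₂, image_image, biUnion_image, map_smul, map_add]

lemma prod {D' E' : Set W} (h : IsTriadicSelfSimilar D E) (h' : IsTriadicSelfSimilar D' E') :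
    IsTriadicSelfSimilar (D ×ˢ D') (E ×ˢ E') := by
  ext ⟨x, x'⟩
  rw [mem_prod, h.mem_iff, h'.mem_iff]
  simp only [mem_iUnion₂, mem_image, Prod.exists, Prod.mk_add_mk, Prod.smul_mk, Prod.mk.injEq,
    exists_prop]
  aesop

end Module

theorem eq {V : Type*} [NormedAddCommGroup V] [NormedSpace ℝ V] {D S T : Set V}
    (hS : IsTriadicSelfSimilar D S) (hT : IsTriadicSelfSimilar D T)
    (hSne : S.Nonempty) (hSc : IsCompact S) (hTne : T.Nonempty) (hTc : IsCompact T) : S = T :=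
  eq_of_eq_biUnion_image_of_lipschitzWith (by norm_num)
    (fun d _ => lipschitzWith_inv_three_smul_add d) hSne hSc hTne hTc hS hT

end IsTriadicSelfSimilar

lemma isTriadicSelfSimilar_zero {V : Type*} [AddCommGroup V] [Module ℝ V] :
    IsTriadicSelfSimilar ({0} : Set V) {0} := by
  simp [IsTriadicSelfSimilar]

lemma isTriadicSelfSimilar_Icc : IsTriadicSelfSimilar {0, 1, 2} (Icc (0 : ℝ) 1) := by
  ext x
  simp only [mem_iUnion₂, mem_image, mem_insert_iff, mem_singleton_iff, mem_Icc, exists_prop,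
    exists_eq_or_imp, exists_eq_left, smul_eq_mul]
  constructor
  · rintro ⟨h0, h1⟩
    rcases le_or_gt x (1 / 3) with h | h
    · exact Or.inl ⟨3 * x, ⟨by linarith, by linarith⟩, by ring⟩
    rcases le_or_gt x (2 / 3) with h' | h'
    · exact Or.inr (Or.inl ⟨3 * x - 1, ⟨by linarith, by linarith⟩, by ring⟩)
    · exact Or.inr (Or.inr ⟨3 * x - 2, ⟨by linarith, by linarith⟩, by ring⟩)
  · rintro (⟨y, ⟨h0, h1⟩, rfl⟩ | ⟨y, ⟨h0, h1⟩, rfl⟩ | ⟨y, ⟨h0, h1⟩, rfl⟩) <;>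
      constructor <;> linarith

def zSection (E : Set (ℝ × ℝ × ℝ)) (c : ℝ) : Set (ℝ × ℝ) := {q | (q.1, q.2, c) ∈ E}

lemma IsCompact.zSection {E : Set (ℝ × ℝ × ℝ)} (hE : IsCompact E) (c : ℝ) :
    IsCompact (zSection E c) := by
  have hiso : Isometry fun q : ℝ × ℝ => (q.1, q.2, c) :=
    Isometry.of_dist_eq fun p q => by simp [Prod.dist_eq]
  exact hiso.isClosedEmbedding.isCompact_preimage hE

lemma zSection_nonempty {E : Set (ℝ × ℝ × ℝ)} {c : ℝ} (hc : c ∈ (fun p => p.2.2) '' E) :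
    (zSection E c).Nonempty := by
  obtain ⟨⟨x, y, z⟩, hp, rfl⟩ := hc
  exact ⟨(x, y), hp⟩

lemma inter_univ_prod_univ_prod_singleton {E : Set (ℝ × ℝ × ℝ)} {c : ℝ} {A B : Set ℝ}
    (h : zSection E c = A ×ˢ B) : E ∩ (univ ×ˢ univ ×ˢ {c}) = A ×ˢ B ×ˢ {c} := by
  ext ⟨x, y, z⟩
  have hxy : (x, y, c) ∈ E ↔ x ∈ A ∧ y ∈ B := Set.ext_iff.1 h (x, y)
  simp only [mem_inter_iff, mem_prod, mem_univ, mem_singleton_iff, true_and]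
  constructor
  · rintro ⟨hp, rfl⟩; exact ⟨(hxy.1 hp).1, (hxy.1 hp).2, rfl⟩
  · rintro ⟨hx, hy, rfl⟩; exact ⟨hxy.2 ⟨hx, hy⟩, rfl⟩

lemma IsTriadicSelfSimilar.zSection {D E : Set (ℝ × ℝ × ℝ)} (h : IsTriadicSelfSimilar D E)
    {c : ℝ} (hc : ∀ d ∈ D, ∀ p ∈ E, p.2.2 + d.2.2 = 3 * c → p.2.2 = c) :
    IsTriadicSelfSimilar (zSection D (2 * c)) (zSection E c) := by
  ext ⟨x, y⟩
  change (x, y, c) ∈ E ↔ _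
  rw [h.mem_iff]
  simp only [_root_.zSection, mem_iUnion₂, mem_image, mem_ofPred_eq, Prod.exists, exists_prop,
    Prod.mk_add_mk, Prod.smul_mk, Prod.mk.injEq, smul_eq_mul]
  constructor
  · rintro ⟨a, b, e, hd, u, v, w, hp, hx, hy, hz⟩
    obtain rfl : w = c := hc _ hd _ hp (by linarith)
    obtain rfl : e = 2 * w := by linarith
    exact ⟨a, b, hd, u, v, hp, hx, hy⟩
  · rintro ⟨a, b, hd, u, v, hp, hx, hy⟩
    exact ⟨a, b, 2 * c, hd, u, v, c, hp, hx, hy, by ring⟩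

def digitsE₄ : Set (ℝ × ℝ × ℝ) :=
  {(0, 0, 2), (1, 0, 2), (2, 0, 2), (0, 0, 0), (0, 1, 0), (0, 2, 0), (2, 0, 0), (2, 1, 0),
    (2, 2, 0), (0, 2, 1)}

lemma image_digitsE₄ : (fun p : ℝ × ℝ × ℝ => p.2.2) '' digitsE₄ = {0, 1, 2} := by
  ext z
  simp only [digitsE₄, mem_image, mem_insert_iff, mem_singleton_iff, exists_eq_or_imp,
    ↓existsAndEq, true_and, or_self_left]
  tauto

lemma digitsE₄_height_mem_Icc {d : ℝ × ℝ × ℝ} (hd : d ∈ digitsE₄) : d.2.2 ∈ Icc (0 : ℝ) 2 := by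
  have hd' : d.2.2 ∈ ({0, 1, 2} : Set ℝ) := image_digitsE₄ ▸ mem_image_of_mem _ hd
  rcases hd' with h | h | h <;> rw [h] <;> norm_num

lemma zSection_digitsE₄_two : zSection digitsE₄ 2 = {0, 1, 2} ×ˢ {0} := by
  ext ⟨x, y⟩
  simp only [zSection, digitsE₄, mem_insert_iff, Prod.mk.injEq, and_true, OfNat.ofNat_ne_zero,
    and_false, mem_singleton_iff, OfNat.ofNat_ne_one, or_self, or_false, mem_ofPred_eq, mem_prod]
  tauto

lemma zSection_digitsE₄_zero : zSection digitsE₄ 0 = {0, 2} ×ˢ {0, 1, 2} := by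
  ext ⟨x, y⟩
  simp only [zSection, digitsE₄, mem_insert_iff, Prod.mk.injEq, OfNat.zero_ne_ofNat, and_false,
    and_true, mem_singleton_iff, zero_ne_one, or_false, false_or, mem_ofPred_eq, mem_prod]
  tauto

theorem fractal_cube_sections
    (E₄ : Set (ℝ × ℝ × ℝ)) (hEne : E₄.Nonempty) (hEc : IsCompact E₄)
    (hE : E₄ = ⋃ d ∈ ({(0, 0, 2), (1, 0, 2), (2, 0, 2),
        (0, 0, 0), (0, 1, 0), (0, 2, 0), (2, 0, 0), (2, 1, 0), (2, 2, 0),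
        (0, 2, 1)} : Set (ℝ × ℝ × ℝ)),
      (fun x : ℝ × ℝ × ℝ => (3 : ℝ)⁻¹ • (x + d)) '' E₄)
    (K : Set ℝ) (hKne : K.Nonempty) (hKc : IsCompact K)
    (hK : K = (fun x : ℝ => x / 3) '' K ∪ (fun x : ℝ => (x + 2) / 3) '' K) :
    (fun p : ℝ × ℝ × ℝ => p.2.2) '' E₄ = Set.Icc (0 : ℝ) 1
    ∧ E₄ ∩ (Set.univ ×ˢ Set.univ ×ˢ ({1} : Set ℝ))
        = Set.Icc (0 : ℝ) 1 ×ˢ ({0} : Set ℝ) ×ˢ ({1} : Set ℝ)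
    ∧ E₄ ∩ (Set.univ ×ˢ Set.univ ×ˢ ({0} : Set ℝ))
        = K ×ˢ Set.Icc (0 : ℝ) 1 ×ˢ ({0} : Set ℝ) := by
  have hE' : IsTriadicSelfSimilar digitsE₄ E₄ := hE
  have hK' : IsTriadicSelfSimilar {0, 2} K := by
    rw [IsTriadicSelfSimilar, biUnion_insert, biUnion_singleton]
    convert hK using 3 <;> rw [smul_eq_mul] <;> ring
  have hz : (fun p : ℝ × ℝ × ℝ => p.2.2) '' E₄ = Icc 0 1 := by
    have h := hE'.image_linearMap ((LinearMap.snd ℝ ℝ ℝ).comp (LinearMap.snd ℝ ℝ (ℝ × ℝ)))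
    change IsTriadicSelfSimilar ((fun p : ℝ × ℝ × ℝ => p.2.2) '' digitsE₄)
      ((fun p : ℝ × ℝ × ℝ => p.2.2) '' E₄) at h
    rw [image_digitsE₄] at h
    exact h.eq isTriadicSelfSimilar_Icc (hEne.image _) (hEc.image (by fun_prop))
      (nonempty_Icc.2 zero_le_one) isCompact_Icc
  have hzE : ∀ p ∈ E₄, p.2.2 ∈ Icc (0 : ℝ) 1 := fun p hp => hz ▸ mem_image_of_mem _ hp
  have h1 : zSection E₄ 1 = Icc 0 1 ×ˢ {0} := by
    have h := hE'.zSection (c := 1) fun d hd p hp hpd => by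
      linarith [(hzE p hp).2, (digitsE₄_height_mem_Icc hd).2]
    rw [mul_one, zSection_digitsE₄_two] at h
    exact h.eq (isTriadicSelfSimilar_Icc.prod isTriadicSelfSimilar_zero)
      (zSection_nonempty (by simp [hz])) (hEc.zSection 1) ⟨(0, 0), by simp⟩
      (isCompact_Icc.prod isCompact_singleton)
  have h0 : zSection E₄ 0 = K ×ˢ Icc 0 1 := by
    have h := hE'.zSection (c := 0) fun d hd p hp hpd => by
      linarith [(hzE p hp).1, (digitsE₄_height_mem_Icc hd).1]
    rw [mul_zero, zSection_digitsE₄_zero] at h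
    exact h.eq (hK'.prod isTriadicSelfSimilar_Icc) (zSection_nonempty (by simp [hz]))
      (hEc.zSection 0) (hKne.prod (nonempty_Icc.2 zero_le_one)) (hKc.prod isCompact_Icc)
  exact ⟨hz, inter_univ_prod_univ_prod_singleton h1, inter_univ_prod_univ_prod_singleton h0⟩
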